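/- arXiv:solv-int/9702006 — 4 statements merged into one kernel-verified Lean document; each statement's English description precedes it below -/
import Mathlib

section
/- The three polynomial functions H1, H2, H3 of the Hénon–Heiles type system with three degrees of freedom are pairwise in involution with respect to the canonical Poisson bracket on ℝ⁶: {H1,H2} = {H1,H3} = {H2,H3} = 0 identically. -/
/- STATEMENT 0: The three polynomials H1, H2, H3 of the 3-dof Hénon–Heiles type
system are pairwise in involution w.r.t. the canonical Poisson bracket on ℝ⁶. -/

noncomputable section

/-- partial derivative of `f` at `x` in the `i`-th coordinate direction,
coordinates ordered as `(q1,q2,q3,p1,p2,p3)`. -/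
def pd (i : Fin 6) (f : (Fin 6 → ℝ) → ℝ) (x : Fin 6 → ℝ) : ℝ :=
  fderiv ℝ f x (Pi.single i 1)

/-- canonical Poisson bracket on ℝ⁶:
`{f,g} = ∑_{k=1}^{3} (∂f/∂q_k ∂g/∂p_k − ∂f/∂p_k ∂g/∂q_k)`. -/
def pb (f g : (Fin 6 → ℝ) → ℝ) (x : Fin 6 → ℝ) : ℝ :=
  (pd 0 f x * pd 3 g x - pd 3 f x * pd 0 g x) +
  (pd 1 f x * pd 4 g x - pd 4 f x * pd 1 g x) +
  (pd 2 f x * pd 5 g x - pd 5 f x * pd 2 g x)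

def H1 (x : Fin 6 → ℝ) : ℝ :=
  (1/2) * (2 * x 3 * x 4 + (x 5)^2) - (5/8) * (x 0)^4 + (5/2) * (x 0)^2 * x 1
    + (1/2) * x 0 * (x 2)^2 - (1/2) * (x 1)^2

def H2 (x : Fin 6 → ℝ) : ℝ :=
  (1/2) * (x 3)^2 + x 3 * x 4 * x 0 + (x 5)^2 * x 0 - (x 4)^2 * x 1
    - x 4 * x 5 * x 2 - (1/2) * (x 0)^5 - (1/4) * (x 0)^2 * (x 2)^2
    + (1/2) * x 1 * (x 2)^2 + 2 * x 0 * (x 1)^2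

def H3 (x : Fin 6 → ℝ) : ℝ :=
  (1/2) * (x 5)^2 * (x 0)^2 + (x 5)^2 * x 1 - x 3 * x 5 * x 2
    - x 4 * x 5 * x 0 * x 2 + (1/2) * (x 4)^2 * (x 2)^2
    + (1/2) * (x 0)^3 * (x 2)^2 - x 0 * x 1 * (x 2)^2 - (1/8) * (x 2)^4

theorem HasFDerivAt.npow {E : Type*} [NormedAddCommGroup E] [NormedSpace ℝ E]
    {f : E → ℝ} {f' : E →L[ℝ] ℝ} {x : E} (h : HasFDerivAt f f' x) (n : ℕ) :
    HasFDerivAt (fun y => f y ^ n) ((n * f x ^ (n - 1)) • f') x :=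
  (hasDerivAt_pow n (f x)).comp_hasFDerivAt x h

set_option maxHeartbeats 1000000 in
theorem henon_heiles_3dof_involution :
    ∀ x : Fin 6 → ℝ, pb H1 H2 x = 0 ∧ pb H1 H3 x = 0 ∧ pb H2 H3 x = 0 := by
  intro x
  have e : ∀ i : Fin 6, HasFDerivAt (fun y : Fin 6 → ℝ => y i)
      (ContinuousLinearMap.proj i : (Fin 6 → ℝ) →L[ℝ] ℝ) x := by
    intro i; exact hasFDerivAt_apply i x
  have t11 := ((((e 3).const_mul 2).mul (e 4)).add ((e 5).npow 2)).const_mul (1/2)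
  have t12 := ((e 0).npow 4).const_mul (5/8)
  have t13 := (((e 0).npow 2).const_mul (5/2)).mul (e 1)
  have t14 := ((e 0).const_mul (1/2)).mul ((e 2).npow 2)
  have t15 := ((e 1).npow 2).const_mul (1/2)
  have h1 : HasFDerivAt H1 _ x := (((t11.sub t12).add t13).add t14).sub t15
  have t21 := ((e 3).npow 2).const_mul (1/2)
  have t22 := ((e 3).mul (e 4)).mul (e 0)
  have t23 := ((e 5).npow 2).mul (e 0)
  have t24 := ((e 4).npow 2).mul (e 1)
  have t25 := ((e 4).mul (e 5)).mul (e 2)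
  have t26 := ((e 0).npow 5).const_mul (1/2)
  have t27 := (((e 0).npow 2).const_mul (1/4)).mul ((e 2).npow 2)
  have t28 := ((e 1).const_mul (1/2)).mul ((e 2).npow 2)
  have t29 := ((e 0).const_mul 2).mul ((e 1).npow 2)
  have h2 : HasFDerivAt H2 _ x :=
    (((((((t21.add t22).add t23).sub t24).sub t25).sub t26).sub t27).add t28).add t29
  have t31 := (((e 5).npow 2).const_mul (1/2)).mul ((e 0).npow 2)
  have t32 := ((e 5).npow 2).mul (e 1)
  have t33 := ((e 3).mul (e 5)).mul (e 2)
  have t34 := (((e 4).mul (e 5)).mul (e 0)).mul (e 2)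
  have t35 := (((e 4).npow 2).const_mul (1/2)).mul ((e 2).npow 2)
  have t36 := (((e 0).npow 3).const_mul (1/2)).mul ((e 2).npow 2)
  have t37 := ((e 0).mul (e 1)).mul ((e 2).npow 2)
  have t38 := ((e 2).npow 4).const_mul (1/8)
  have h3 : HasFDerivAt H3 _ x :=
    ((((((t31.add t32).sub t33).sub t34).add t35).add t36).sub t37).sub t38
  have d10 : pd 0 H1 x = (1/2)*(x 2)^2 + 5*x 0*x 1 + (-5/2)*(x 0)^3 := by
    rw [pd, h1.fderiv]; simp (config := { decide := true }) [Pi.single_apply]; try ring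
  have d11 : pd 1 H1 x = -(x 1) + (5/2)*(x 0)^2 := by
    rw [pd, h1.fderiv]; simp (config := { decide := true }) [Pi.single_apply]; try ring
  have d12 : pd 2 H1 x = x 0*x 2 := by
    rw [pd, h1.fderiv]; simp (config := { decide := true }) [Pi.single_apply]; try ring
  have d13 : pd 3 H1 x = x 4 := by
    rw [pd, h1.fderiv]; simp (config := { decide := true }) [Pi.single_apply]; try ring
  have d14 : pd 4 H1 x = x 3 := by
    rw [pd, h1.fderiv]; simp (config := { decide := true }) [Pi.single_apply]; try ring
  have d15 : pd 5 H1 x = x 5 := by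
    rw [pd, h1.fderiv]; simp (config := { decide := true }) [Pi.single_apply]; try ring
  have d20 : pd 0 H2 x = (x 5)^2 + x 3*x 4 + 2*(x 1)^2 + (-1/2)*x 0*(x 2)^2 + (-5/2)*(x 0)^4 := by
    rw [pd, h2.fderiv]; simp (config := { decide := true }) [Pi.single_apply]; try ring
  have d21 : pd 1 H2 x = -(x 4)^2 + (1/2)*(x 2)^2 + 4*x 0*x 1 := by
    rw [pd, h2.fderiv]; simp (config := { decide := true }) [Pi.single_apply]; try ring
  have d22 : pd 2 H2 x = -(x 4*x 5) + x 1*x 2 + (-1/2)*(x 0)^2*x 2 := by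
    rw [pd, h2.fderiv]; simp (config := { decide := true }) [Pi.single_apply]; try ring
  have d23 : pd 3 H2 x = x 3 + x 0*x 4 := by
    rw [pd, h2.fderiv]; simp (config := { decide := true }) [Pi.single_apply]; try ring
  have d24 : pd 4 H2 x = -(x 2*x 5) + -2*x 1*x 4 + x 0*x 3 := by
    rw [pd, h2.fderiv]; simp (config := { decide := true }) [Pi.single_apply]; try ring
  have d25 : pd 5 H2 x = -(x 2*x 4) + 2*x 0*x 5 := by
    rw [pd, h2.fderiv]; simp (config := { decide := true }) [Pi.single_apply]; try ring
  have d30 : pd 0 H3 x = -(x 2*x 4*x 5) + -(x 1*(x 2)^2) + x 0*(x 5)^2 + (3/2)*(x 0)^2*(x 2)^2 := by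
    rw [pd, h3.fderiv]; simp (config := { decide := true }) [Pi.single_apply]; try ring
  have d31 : pd 1 H3 x = (x 5)^2 + -(x 0*(x 2)^2) := by
    rw [pd, h3.fderiv]; simp (config := { decide := true }) [Pi.single_apply]; try ring
  have d32 : pd 2 H3 x = -(x 3*x 5) + x 2*(x 4)^2 + (-1/2)*(x 2)^3 + -(x 0*x 4*x 5) + -2*x 0*x 1*x 2 + (x 0)^3*x 2 := by
    rw [pd, h3.fderiv]; simp (config := { decide := true }) [Pi.single_apply]; try ring
  have d33 : pd 3 H3 x = -(x 2*x 5) := by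
    rw [pd, h3.fderiv]; simp (config := { decide := true }) [Pi.single_apply]; try ring
  have d34 : pd 4 H3 x = (x 2)^2*x 4 + -(x 0*x 2*x 5) := by
    rw [pd, h3.fderiv]; simp (config := { decide := true }) [Pi.single_apply]; try ring
  have d35 : pd 5 H3 x = -(x 2*x 3) + 2*x 1*x 5 + -(x 0*x 2*x 4) + (x 0)^2*x 5 := by
    rw [pd, h3.fderiv]; simp (config := { decide := true }) [Pi.single_apply]; try ring
  refine ⟨?_, ?_, ?_⟩
  · rw [pb, d10, d11, d12, d13, d14, d15, d20, d21, d22, d23, d24, d25]; ring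
  · rw [pb, d10, d11, d12, d13, d14, d15, d30, d31, d32, d33, d34, d35]; ring
  · rw [pb, d20, d21, d22, d23, d24, d25, d30, d31, d32, d33, d34, d35]; ring

end
end

section
/- Separability of the four-degrees-of-freedom Hénon–Heiles type system: let λ1,λ2,λ3,λ4 ∈ ℝ be pairwise distinct and nonzero, let h,c0,c1,c2 ∈ ℝ, and suppose μ1,μ2,μ3,μ4 ∈ ℝ satisfy the separation relations 16 λi μi² = λi⁸ + 8h λi³ + c2 λi² + c1 λi + c0 for i = 1,2,3,4. Then Σ_{i=1}^{4} λi(16 μi² − λi⁷)/(8 Δi) = h, where Δi := Π_{j≠i}(λi − λj). -/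
set_option maxHeartbeats 2000000


/- STATEMENT 14: separability of the 4-dof Hénon–Heiles type system: if
16 λi μi² = λi⁸ + 8h λi³ + c2 λi² + c1 λi + c0 for i = 1,2,3,4, then
Σ λi(16 μi² − λi⁷)/(8 Δi) = h. -/

theorem henon_heiles_4dof_separability
    (l1 l2 l3 l4 : ℝ)
    (h12 : l1 ≠ l2) (h13 : l1 ≠ l3) (h14 : l1 ≠ l4)
    (h23 : l2 ≠ l3) (h24 : l2 ≠ l4) (h34 : l3 ≠ l4)
    (hl1 : l1 ≠ 0) (hl2 : l2 ≠ 0) (hl3 : l3 ≠ 0) (hl4 : l4 ≠ 0)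
    (h c0 c1 c2 : ℝ) (m1 m2 m3 m4 : ℝ)
    (e1 : 16 * l1 * m1^2 = l1^8 + 8 * h * l1^3 + c2 * l1^2 + c1 * l1 + c0)
    (e2 : 16 * l2 * m2^2 = l2^8 + 8 * h * l2^3 + c2 * l2^2 + c1 * l2 + c0)
    (e3 : 16 * l3 * m3^2 = l3^8 + 8 * h * l3^3 + c2 * l3^2 + c1 * l3 + c0)
    (e4 : 16 * l4 * m4^2 = l4^8 + 8 * h * l4^3 + c2 * l4^2 + c1 * l4 + c0) :
    l1 * (16 * m1^2 - l1^7) / (8 * ((l1 - l2) * (l1 - l3) * (l1 - l4)))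
      + l2 * (16 * m2^2 - l2^7) / (8 * ((l2 - l1) * (l2 - l3) * (l2 - l4)))
      + l3 * (16 * m3^2 - l3^7) / (8 * ((l3 - l1) * (l3 - l2) * (l3 - l4)))
      + l4 * (16 * m4^2 - l4^7) / (8 * ((l4 - l1) * (l4 - l2) * (l4 - l3))) = h := by
  have k1 : l1 * (16 * m1^2 - l1^7) = 8 * h * l1^3 + c2 * l1^2 + c1 * l1 + c0 := by
    linear_combination e1
  have k2 : l2 * (16 * m2^2 - l2^7) = 8 * h * l2^3 + c2 * l2^2 + c1 * l2 + c0 := by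
    linear_combination e2
  have k3 : l3 * (16 * m3^2 - l3^7) = 8 * h * l3^3 + c2 * l3^2 + c1 * l3 + c0 := by
    linear_combination e3
  have k4 : l4 * (16 * m4^2 - l4^7) = 8 * h * l4^3 + c2 * l4^2 + c1 * l4 + c0 := by
    linear_combination e4
  rw [k1, k2, k3, k4]
  have d12 : l1 - l2 ≠ 0 := sub_ne_zero.mpr h12
  have d13 : l1 - l3 ≠ 0 := sub_ne_zero.mpr h13
  have d14 : l1 - l4 ≠ 0 := sub_ne_zero.mpr h14
  have d23 : l2 - l3 ≠ 0 := sub_ne_zero.mpr h23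
  have d24 : l2 - l4 ≠ 0 := sub_ne_zero.mpr h24
  have d34 : l3 - l4 ≠ 0 := sub_ne_zero.mpr h34
  have d21 : l2 - l1 ≠ 0 := sub_ne_zero.mpr h12.symm
  have d31 : l3 - l1 ≠ 0 := sub_ne_zero.mpr h13.symm
  have d41 : l4 - l1 ≠ 0 := sub_ne_zero.mpr h14.symm
  have d32 : l3 - l2 ≠ 0 := sub_ne_zero.mpr h23.symm
  have d42 : l4 - l2 ≠ 0 := sub_ne_zero.mpr h24.symm
  have d43 : l4 - l3 ≠ 0 := sub_ne_zero.mpr h34.symm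
  field_simp
  ring
end

section
/- Verification part of the construction of Pfaffian quasi-biHamiltonian systems with n degrees of freedom: for every n ≥ 1 and every choice of n smooth functions f_i : ℝ × ℝ → ℝ, the functions H(λ,μ) = Σ_{i=1}^{n} f_i(λ_i, μ_i)/Δ_i and F(λ,μ) = Σ_{i=1}^{n} ρ_i f_i(λ_i, μ_i)/Δ_i satisfy, at every point of the open set Ω = {(λ,μ) ∈ ℝⁿ × ℝⁿ : the λ_i are pairwise distinct and all nonzero}, the quasi-biHamiltonian equations ∂H/∂μ_i = (λ_i/ρ) ∂F/∂μ_i and ∂H/∂λ_i = (λ_i/ρ) ∂F/∂λ_i for each i = 1,…,n. -/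
/- STATEMENT 15: verification of the general Pfaffian quasi-biHamiltonian system
with n degrees of freedom: H = Σ f_i(λ_i,μ_i)/Δ_i and F = Σ ρ_i f_i(λ_i,μ_i)/Δ_i
satisfy ∂H/∂μ_i = (λ_i/ρ) ∂F/∂μ_i and ∂H/∂λ_i = (λ_i/ρ) ∂F/∂λ_i wherever the
λ_i are pairwise distinct and nonzero. -/

noncomputable section

open Finset

/-- `Δ_i(λ) = Π_{j ≠ i} (λ_i − λ_j)`. -/
def Delta {n : ℕ} (i : Fin n) (l : Fin n → ℝ) : ℝ :=
  ∏ j ∈ univ.erase i, (l i - l j)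

/-- `ρ(λ) = Π_i λ_i`. -/
def rho {n : ℕ} (l : Fin n → ℝ) : ℝ := ∏ i, l i

/-- `ρ_i(λ) = Π_{j ≠ i} λ_j`. -/
def rhoi {n : ℕ} (i : Fin n) (l : Fin n → ℝ) : ℝ :=
  ∏ j ∈ univ.erase i, l j

/-- `H(λ,μ) = Σ_i f_i(λ_i,μ_i)/Δ_i`. -/
def Hgen {n : ℕ} (f : Fin n → ℝ × ℝ → ℝ) (x : (Fin n → ℝ) × (Fin n → ℝ)) : ℝ :=
  ∑ i, f i (x.1 i, x.2 i) / Delta i x.1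

/-- `F(λ,μ) = Σ_i ρ_i f_i(λ_i,μ_i)/Δ_i`. -/
def Fgen {n : ℕ} (f : Fin n → ℝ × ℝ → ℝ) (x : (Fin n → ℝ) × (Fin n → ℝ)) : ℝ :=
  ∑ i, rhoi i x.1 * f i (x.1 i, x.2 i) / Delta i x.1

/-- first-component coordinate projection as a continuous linear map -/
def c1 (n : ℕ) (j : Fin n) : ((Fin n → ℝ) × (Fin n → ℝ)) →L[ℝ] ℝ :=
  (ContinuousLinearMap.proj j).comp (ContinuousLinearMap.fst ℝ (Fin n → ℝ) (Fin n → ℝ))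

/-- second-component coordinate projection -/
def c2 (n : ℕ) (j : Fin n) : ((Fin n → ℝ) × (Fin n → ℝ)) →L[ℝ] ℝ :=
  (ContinuousLinearMap.proj j).comp (ContinuousLinearMap.snd ℝ (Fin n → ℝ) (Fin n → ℝ))

/-- the pair projection -/
def pk (n : ℕ) (j : Fin n) : ((Fin n → ℝ) × (Fin n → ℝ)) →L[ℝ] ℝ × ℝ :=
  (c1 n j).prod (c2 n j)

@[simp] lemma c1_apply (n : ℕ) (j : Fin n) (x : (Fin n → ℝ) × (Fin n → ℝ)) :
    c1 n j x = x.1 j := rfl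

@[simp] lemma c2_apply (n : ℕ) (j : Fin n) (x : (Fin n → ℝ) × (Fin n → ℝ)) :
    c2 n j x = x.2 j := rfl

@[simp] lemma pk_apply (n : ℕ) (j : Fin n) (x : (Fin n → ℝ) × (Fin n → ℝ)) :
    pk n j x = (x.1 j, x.2 j) := rfl

private lemma qbh_key (c a b P Q : ℝ) (ha : a ≠ 0) (hb : b ≠ 0) (hd : b - a ≠ 0)
    (hP : P ≠ 0) (hQ : Q ≠ 0) :
    c * (-(((b - a) * P) ^ 2)⁻¹ * -P) =
      a / (b * (a * Q)) *
        (a * Q * c * (-(((b - a) * P) ^ 2)⁻¹ * -P) + ((b - a) * P)⁻¹ * (c * Q)) := by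
  field_simp
  ring

theorem pfaffian_qbh_verification
    (n : ℕ) (hn : 1 ≤ n) (f : Fin n → ℝ × ℝ → ℝ)
    (hf : ∀ i, ContDiff ℝ (⊤ : ℕ∞) (f i)) :
    ∀ l m : Fin n → ℝ,
      (∀ i j : Fin n, i ≠ j → l i ≠ l j) → (∀ i, l i ≠ 0) →
      ∀ i : Fin n,
        fderiv ℝ (Hgen f) (l, m) ((0 : Fin n → ℝ), Pi.single i 1) =
          (l i / rho l) * fderiv ℝ (Fgen f) (l, m) ((0 : Fin n → ℝ), Pi.single i 1) ∧
        fderiv ℝ (Hgen f) (l, m) (Pi.single i 1, (0 : Fin n → ℝ)) =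
          (l i / rho l) * fderiv ℝ (Fgen f) (l, m) (Pi.single i 1, (0 : Fin n → ℝ)) := by
  intro l m hdist hne i
  classical
  have hΔ : ∀ k, Delta k l ≠ 0 := fun k =>
    Finset.prod_ne_zero_iff.mpr fun j hj =>
      sub_ne_zero.mpr (hdist k j (Ne.symm (Finset.ne_of_mem_erase hj)))
  have hρi : ∀ k, rhoi k l ≠ 0 := fun k =>
    Finset.prod_ne_zero_iff.mpr fun j _ => hne j
  have hρ : rho l ≠ 0 := Finset.prod_ne_zero_iff.mpr fun j _ => hne j
  have hsplit : ∀ k, rho l = l k * rhoi k l := fun k =>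
    (Finset.mul_prod_erase univ l (mem_univ k)).symm
  -- coordinate derivatives
  have hcoord1 : ∀ j : Fin n,
      HasFDerivAt (fun x : (Fin n → ℝ) × (Fin n → ℝ) => x.1 j) (c1 n j) (l, m) :=
    fun j => (c1 n j).hasFDerivAt
  have hfk : ∀ k, HasFDerivAt (fun x : (Fin n → ℝ) × (Fin n → ℝ) => f k (x.1 k, x.2 k))
      ((fderiv ℝ (f k) (l k, m k)).comp (pk n k)) (l, m) := fun k =>
    ((hf k).differentiable (by simp) (l k, m k)).hasFDerivAt.comp (l, m) (pk n k).hasFDerivAt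
  -- derivative of Delta
  have hD : ∀ k, HasFDerivAt (fun x : (Fin n → ℝ) × (Fin n → ℝ) => Delta k x.1)
      (∑ j ∈ univ.erase k,
        (∏ j' ∈ (univ.erase k).erase j, (l k - l j')) • (c1 n k - c1 n j)) (l, m) := by
    intro k
    have h := HasFDerivAt.finset_prod (𝕜 := ℝ) (u := univ.erase k)
      (g := fun j (x : (Fin n → ℝ) × (Fin n → ℝ)) => x.1 k - x.1 j)
      (g' := fun j => c1 n k - c1 n j) (x := (l, m))
      (fun j _ => (hcoord1 k).sub (hcoord1 j))
    have e : (fun x : (Fin n → ℝ) × (Fin n → ℝ) => Delta k x.1) =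
        fun x => ∏ j ∈ univ.erase k, (x.1 k - x.1 j) := rfl
    rw [e]
    convert h using 2
  -- derivative of rhoi
  have hR : ∀ k, HasFDerivAt (fun x : (Fin n → ℝ) × (Fin n → ℝ) => rhoi k x.1)
      (∑ j ∈ univ.erase k,
        (∏ j' ∈ (univ.erase k).erase j, l j') • c1 n j) (l, m) := by
    intro k
    have h := HasFDerivAt.finset_prod (𝕜 := ℝ) (u := univ.erase k)
      (g := fun j (x : (Fin n → ℝ) × (Fin n → ℝ)) => x.1 j)
      (g' := fun j => c1 n j) (x := (l, m))
      (fun j _ => hcoord1 j)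
    have e : (fun x : (Fin n → ℝ) × (Fin n → ℝ) => rhoi k x.1) =
        fun x => ∏ j ∈ univ.erase k, x.1 j := rfl
    rw [e]
    convert h using 2
  -- derivative of (Delta k ·)⁻¹
  have hI : ∀ k, HasFDerivAt (fun x : (Fin n → ℝ) × (Fin n → ℝ) => (Delta k x.1)⁻¹)
      ((-(Delta k l ^ 2)⁻¹) • ∑ j ∈ univ.erase k,
        (∏ j' ∈ (univ.erase k).erase j, (l k - l j')) • (c1 n k - c1 n j)) (l, m) := fun k =>
    (hasDerivAt_inv (hΔ k)).comp_hasFDerivAt (l, m) (hD k)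
  -- derivative of the k-th term of H
  have htH : ∀ k, HasFDerivAt
      (fun x : (Fin n → ℝ) × (Fin n → ℝ) => f k (x.1 k, x.2 k) * (Delta k x.1)⁻¹)
      (f k (l k, m k) • ((-(Delta k l ^ 2)⁻¹) • ∑ j ∈ univ.erase k,
          (∏ j' ∈ (univ.erase k).erase j, (l k - l j')) • (c1 n k - c1 n j)) +
        (Delta k l)⁻¹ • ((fderiv ℝ (f k) (l k, m k)).comp (pk n k))) (l, m) := fun k =>
    (hfk k).mul (hI k)
  -- derivative of rhoi * f
  have hab : ∀ k, HasFDerivAt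
      (fun x : (Fin n → ℝ) × (Fin n → ℝ) => rhoi k x.1 * f k (x.1 k, x.2 k))
      (rhoi k l • ((fderiv ℝ (f k) (l k, m k)).comp (pk n k)) +
        f k (l k, m k) • ∑ j ∈ univ.erase k,
          (∏ j' ∈ (univ.erase k).erase j, l j') • c1 n j) (l, m) := fun k =>
    (hR k).mul (hfk k)
  -- derivative of the k-th term of F
  have htF : ∀ k, HasFDerivAt
      (fun x : (Fin n → ℝ) × (Fin n → ℝ) => rhoi k x.1 * f k (x.1 k, x.2 k) * (Delta k x.1)⁻¹)
      ((rhoi k l * f k (l k, m k)) • ((-(Delta k l ^ 2)⁻¹) • ∑ j ∈ univ.erase k,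
          (∏ j' ∈ (univ.erase k).erase j, (l k - l j')) • (c1 n k - c1 n j)) +
        (Delta k l)⁻¹ • (rhoi k l • ((fderiv ℝ (f k) (l k, m k)).comp (pk n k)) +
          f k (l k, m k) • ∑ j ∈ univ.erase k,
            (∏ j' ∈ (univ.erase k).erase j, l j') • c1 n j)) (l, m) := fun k =>
    (hab k).mul (hI k)
  -- total derivatives
  have hH : HasFDerivAt (Hgen f)
      (∑ k, (f k (l k, m k) • ((-(Delta k l ^ 2)⁻¹) • ∑ j ∈ univ.erase k,
          (∏ j' ∈ (univ.erase k).erase j, (l k - l j')) • (c1 n k - c1 n j)) +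
        (Delta k l)⁻¹ • ((fderiv ℝ (f k) (l k, m k)).comp (pk n k)))) (l, m) := by
    have e : Hgen f = fun x : (Fin n → ℝ) × (Fin n → ℝ) =>
        ∑ k, f k (x.1 k, x.2 k) * (Delta k x.1)⁻¹ := by
      funext x; simp [Hgen, div_eq_mul_inv]
    rw [e]
    exact HasFDerivAt.fun_sum fun k _ => htH k
  have hF : HasFDerivAt (Fgen f)
      (∑ k, ((rhoi k l * f k (l k, m k)) • ((-(Delta k l ^ 2)⁻¹) • ∑ j ∈ univ.erase k,
          (∏ j' ∈ (univ.erase k).erase j, (l k - l j')) • (c1 n k - c1 n j)) +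
        (Delta k l)⁻¹ • (rhoi k l • ((fderiv ℝ (f k) (l k, m k)).comp (pk n k)) +
          f k (l k, m k) • ∑ j ∈ univ.erase k,
            (∏ j' ∈ (univ.erase k).erase j, l j') • c1 n j))) (l, m) := by
    have e : Fgen f = fun x : (Fin n → ℝ) × (Fin n → ℝ) =>
        ∑ k, rhoi k x.1 * f k (x.1 k, x.2 k) * (Delta k x.1)⁻¹ := by
      funext x; simp [Fgen, div_eq_mul_inv]
    rw [e]
    exact HasFDerivAt.fun_sum fun k _ => htF k
  rw [hH.fderiv, hF.fderiv]
  constructor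
  · -- μ-direction
    simp only [ContinuousLinearMap.add_apply, ContinuousLinearMap.sum_apply,
      ContinuousLinearMap.smul_apply, ContinuousLinearMap.sub_apply,
      ContinuousLinearMap.comp_apply, c1_apply, c2_apply, pk_apply, smul_eq_mul,
      Pi.zero_apply, sub_self, mul_zero, Finset.sum_const_zero, zero_add, add_zero]
    rw [Finset.mul_sum]
    refine Finset.sum_congr rfl fun k _ => ?_
    rcases eq_or_ne k i with rfl | hk
    · rw [Pi.single_eq_same, hsplit k, div_mul_cancel_left₀ (hne k)]
      rw [show (rhoi k l)⁻¹ * ((Delta k l)⁻¹ * (rhoi k l * (fderiv ℝ (f k) (l k, m k)) (0, 1))) =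
          ((rhoi k l)⁻¹ * rhoi k l) * ((Delta k l)⁻¹ * (fderiv ℝ (f k) (l k, m k)) (0, 1)) from by
        ring, inv_mul_cancel₀ (hρi k), one_mul]
    · rw [Pi.single_eq_of_ne hk]
      simp [Prod.mk_zero_zero]
  · -- λ-direction
    simp only [ContinuousLinearMap.add_apply, ContinuousLinearMap.sum_apply,
      ContinuousLinearMap.smul_apply, ContinuousLinearMap.sub_apply,
      ContinuousLinearMap.comp_apply, c1_apply, c2_apply, pk_apply, smul_eq_mul,
      Pi.zero_apply]
    rw [Finset.mul_sum]
    refine Finset.sum_congr rfl fun k _ => ?_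
    rcases eq_or_ne k i with rfl | hk
    · -- diagonal term
      rw [Pi.single_eq_same]
      have hSR : ∑ j ∈ univ.erase k, (∏ j' ∈ (univ.erase k).erase j, l j') * (Pi.single k 1 : Fin n → ℝ) j
          = (0 : ℝ) :=
        Finset.sum_eq_zero fun j hj => by
          rw [Pi.single_eq_of_ne (Finset.ne_of_mem_erase hj), mul_zero]
      rw [hSR, mul_zero, add_zero, hsplit k, div_mul_cancel_left₀ (hne k)]
      field_simp [hρi k, hΔ k]
    · -- off-diagonal term
      rw [Pi.single_eq_of_ne hk]
      have hmem : i ∈ univ.erase k := Finset.mem_erase.mpr ⟨Ne.symm hk, mem_univ i⟩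
      have hS : ∑ j ∈ univ.erase k,
          (∏ j' ∈ (univ.erase k).erase j, (l k - l j')) * ((0 : ℝ) - (Pi.single i 1 : Fin n → ℝ) j)
          = -(∏ j' ∈ (univ.erase k).erase i, (l k - l j')) := by
        rw [Finset.sum_eq_single i]
        · rw [Pi.single_eq_same]; ring
        · intro j _ hji; rw [Pi.single_eq_of_ne hji]; ring
        · intro h; exact absurd hmem h
      have hQ : ∑ j ∈ univ.erase k, (∏ j' ∈ (univ.erase k).erase j, l j') * (Pi.single i 1 : Fin n → ℝ) j
          = ∏ j' ∈ (univ.erase k).erase i, l j' := by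
        rw [Finset.sum_eq_single i]
        · rw [Pi.single_eq_same, mul_one]
        · intro j _ hji; rw [Pi.single_eq_of_ne hji, mul_zero]
        · intro h; exact absurd hmem h
      have hfac : Delta k l = (l k - l i) * ∏ j' ∈ (univ.erase k).erase i, (l k - l j') :=
        (Finset.mul_prod_erase (univ.erase k) (fun j => l k - l j) hmem).symm
      have hrfac : rhoi k l = l i * ∏ j' ∈ (univ.erase k).erase i, l j' :=
        (Finset.mul_prod_erase (univ.erase k) l hmem).symm
      have hPne : (∏ j' ∈ (univ.erase k).erase i, (l k - l j')) ≠ 0 := by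
        have h := hΔ k; rw [hfac] at h; exact right_ne_zero_of_mul h
      have hlki : l k - l i ≠ 0 := sub_ne_zero.mpr (hdist k i hk)
      have hQne : (∏ j' ∈ (univ.erase k).erase i, l j') ≠ 0 :=
        Finset.prod_ne_zero_iff.mpr fun j _ => hne j
      rw [hS, hQ]
      simp only [Prod.mk_zero_zero, map_zero, mul_zero, zero_add, add_zero]
      rw [hsplit k, hrfac, hfac]
      exact qbh_key (f k (l k, m k)) (l i) (l k) _ _ (hne i) (hne k) hlki hPne hQne

end
end

section
/- Structure of solutions of the μ-part of the Pfaffian quasi-biHamiltonian equations: let n ≥ 1, let V ⊆ ℝⁿ be an open box (a product of open intervals) on which all coordinates λ_i are nonzero, and let H, F : V × ℝⁿ → ℝ be smooth functions satisfying ∂H/∂μ_i = (λ_i/ρ) ∂F/∂μ_i on V × ℝⁿ for every i = 1,…,n, where ρ = Π_{i=1}^n λ_i. Then there exist smooth functions G_i : V × ℝ → ℝ (i = 1,…,n) and K : V → ℝ such that H(λ,μ) = (1/ρ) Σ_{i=1}^{n} λ_i G_i(λ, μ_i) + K(λ) and F(λ,μ) = Σ_{i=1}^{n} G_i(λ, μ_i),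 where G_i(λ, μ_i) depends on λ and on the single variable μ_i only. -/
/- STATEMENT 16: structure of solutions of the μ-part of the Pfaffian
quasi-biHamiltonian equations: on an open box V (with all coordinates nonzero),
any smooth solution (H,F) of ∂H/∂μ_i = (λ_i/ρ) ∂F/∂μ_i (i = 1,…,n) has the form
H = (1/ρ) Σ λ_i G_i(λ,μ_i) + K(λ), F = Σ G_i(λ,μ_i). -/

noncomputable section

open Finset

/-- Constancy from vanishing directional derivatives along coordinates where `a` and `b` differ. -/
private lemma pqbh_aux_const {n : ℕ} {g : (Fin n → ℝ) → ℝ} (hg : Differentiable ℝ g)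
    (a b : Fin n → ℝ)
    (h : ∀ x : Fin n → ℝ, ∀ j : Fin n, a j = b j ∨ fderiv ℝ g x (Pi.single j 1) = 0) :
    g a = g b := by
  have key : ∀ x : Fin n → ℝ, fderiv ℝ g x (b - a) = 0 := by
    intro x
    have hba : (b - a) = ∑ j, (b j - a j) • (Pi.single j 1 : Fin n → ℝ) := by
      have := Finset.univ_sum_single (b - a)
      rw [← this]
      refine Finset.sum_congr rfl fun j _ => ?_
      funext k
      rcases eq_or_ne k j with rfl | hkj
      · simp
      · simp [Pi.single_apply, Ne.symm hkj]
    rw [hba, map_sum]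
    refine Finset.sum_eq_zero fun j _ => ?_
    rw [map_smul]
    rcases h x j with h1 | h1
    · simp [h1]
    · simp [h1]
  set ψ : ℝ → ℝ := fun t => g (a + t • (b - a)) with hψ
  have hline : ∀ t : ℝ, HasDerivAt (fun t : ℝ => a + t • (b - a)) (b - a) t := by
    intro t
    have := ((hasDerivAt_id t).smul_const (b - a)).const_add a
    simpa using this
  have hd : ∀ t : ℝ, HasDerivAt ψ 0 t := by
    intro t
    have := ((hg _).hasFDerivAt.comp_hasDerivAt t (hline t))
    rw [key] at this
    exact this
  have hconst := is_const_of_deriv_eq_zero (fun t => (hd t).differentiableAt)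
    (fun t => (hd t).deriv) 1 0
  simpa [ψ] using hconst.symm

/-- A continuous function on the box which vanishes wherever two fixed coordinates differ,
vanishes everywhere. -/
private lemma pqbh_dense_zero {n : ℕ} (I : Fin n → Set ℝ) (hIopen : ∀ i, IsOpen (I i))
    (M : (Fin n → ℝ) × (Fin n → ℝ) → ℝ)
    (hM : ContinuousOn M ((Set.univ.pi I) ×ˢ (Set.univ : Set (Fin n → ℝ))))
    (i j : Fin n) (hij : i ≠ j)
    (hz : ∀ x ∈ (Set.univ.pi I) ×ˢ (Set.univ : Set (Fin n → ℝ)), x.1 i ≠ x.1 j → M x = 0)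
    (x : (Fin n → ℝ) × (Fin n → ℝ))
    (hx : x ∈ (Set.univ.pi I) ×ˢ (Set.univ : Set (Fin n → ℝ))) : M x = 0 := by
  set S := (Set.univ.pi I) ×ˢ (Set.univ : Set (Fin n → ℝ)) with hS
  have hSopen : IsOpen S := (isOpen_set_pi Set.finite_univ fun a _ => hIopen a).prod isOpen_univ
  rcases ne_or_eq (x.1 i) (x.1 j) with hne | heq'
  · exact hz x hx hne
  · set t0 := x.1 i with ht0
    set u : ℝ → (Fin n → ℝ) × (Fin n → ℝ) := fun t => (Function.update x.1 i t, x.2) with hu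
    have hucont : Continuous u := by
      apply Continuous.prodMk
      · exact (continuous_const.update i continuous_id)
      · exact continuous_const
    have hu0 : u t0 = x := by
      simp [u, t0, Function.update_eq_self]
    have hMc : ContinuousAt (fun t => M (u t)) t0 := by
      have h1 : ContinuousAt M (u t0) := by
        rw [hu0]; exact hM.continuousAt (hSopen.mem_nhds hx)
      exact h1.comp (hucont.continuousAt (x := t0))
    have hxpi : ∀ k, x.1 k ∈ I k := Set.mem_univ_pi.1 hx.1
    have hmemI : t0 ∈ I i := hxpi i
    have hev : (fun t => M (u t)) =ᶠ[nhdsWithin t0 {t0}ᶜ] (fun _ => (0 : ℝ)) := by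
      have hIin : I i ∈ nhdsWithin t0 {t0}ᶜ :=
        nhdsWithin_le_nhds ((hIopen i).mem_nhds hmemI)
      filter_upwards [hIin, self_mem_nhdsWithin] with t htI htne
      apply hz (u t)
      · refine ⟨Set.mem_univ_pi.2 fun k => ?_, trivial⟩
        rcases eq_or_ne k i with rfl | hki
        · simpa [u] using htI
        · simpa [u, Function.update_of_ne hki] using hxpi k
      · have h1 : (u t).1 i = t := by simp [u]
        have h2 : (u t).1 j = x.1 j := by
          simp [u, Function.update_of_ne (Ne.symm hij)]
        rw [h1, h2, ← heq']
        exact htne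
    have hlim1 : Filter.Tendsto (fun t => M (u t)) (nhdsWithin t0 {t0}ᶜ) (nhds (M x)) := by
      have := hMc.tendsto
      rw [hu0] at this
      exact this.mono_left nhdsWithin_le_nhds
    have hlim2 : Filter.Tendsto (fun t => M (u t)) (nhdsWithin t0 {t0}ᶜ) (nhds 0) := by
      rw [Filter.tendsto_congr' hev]
      exact tendsto_const_nhds
    exact tendsto_nhds_unique hlim1 hlim2

private lemma pqbh_fiber_fderiv {n : ℕ} (A : (Fin n → ℝ) × (Fin n → ℝ) → ℝ)
    {l μ : Fin n → ℝ} (hA : DifferentiableAt ℝ A (l, μ)) (v : Fin n → ℝ) :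
    fderiv ℝ (fun ν => A (l, ν)) μ v = fderiv ℝ A (l, μ) (0, v) := by
  have hcomp := hA.hasFDerivAt.comp μ (hasFDerivAt_prodMk_right l μ)
  have := hcomp.fderiv
  rw [show (fun ν => A (l, ν)) = (A ∘ fun ν => (l, ν)) from rfl, this]
  simp

private lemma pqbh_fderiv_apply {n : ℕ} {G : (Fin n → ℝ) × (Fin n → ℝ) → ℝ}
    {x : (Fin n → ℝ) × (Fin n → ℝ)}
    (hG : DifferentiableAt ℝ (fderiv ℝ G) x)
    (v w : (Fin n → ℝ) × (Fin n → ℝ)) :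
    fderiv ℝ (fun y => fderiv ℝ G y v) x w = fderiv ℝ (fderiv ℝ G) x w v := by
  have := fderiv_clm_apply (c := fderiv ℝ G) (u := fun _ => v) hG (differentiableAt_const v)
  rw [this]
  simp

private lemma pqbh_mixed_zero {n : ℕ} (I : Fin n → Set ℝ) (hIopen : ∀ i, IsOpen (I i))
    (hV0 : ∀ l ∈ Set.univ.pi I, ∀ i, l i ≠ 0)
    (H F : (Fin n → ℝ) × (Fin n → ℝ) → ℝ)
    (hH : ContDiffOn ℝ (⊤ : ℕ∞) H ((Set.univ.pi I) ×ˢ (Set.univ : Set (Fin n → ℝ))))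
    (hF : ContDiffOn ℝ (⊤ : ℕ∞) F ((Set.univ.pi I) ×ˢ (Set.univ : Set (Fin n → ℝ))))
    (heq : ∀ x ∈ (Set.univ.pi I) ×ˢ (Set.univ : Set (Fin n → ℝ)), ∀ i : Fin n,
      fderiv ℝ H x ((0 : Fin n → ℝ), Pi.single i 1) =
        (x.1 i / ∏ k, x.1 k) * fderiv ℝ F x ((0 : Fin n → ℝ), Pi.single i 1))
    (i j : Fin n) (hij : i ≠ j)
    (x : (Fin n → ℝ) × (Fin n → ℝ))
    (hx : x ∈ (Set.univ.pi I) ×ˢ (Set.univ : Set (Fin n → ℝ))) :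
    fderiv ℝ (fderiv ℝ F) x ((0 : Fin n → ℝ), Pi.single j 1)
      ((0 : Fin n → ℝ), Pi.single i 1) = 0 := by
  set S := (Set.univ.pi I) ×ˢ (Set.univ : Set (Fin n → ℝ)) with hS
  have hSopen : IsOpen S := (isOpen_set_pi Set.finite_univ fun a _ => hIopen a).prod isOpen_univ
  have hFd : ContDiffOn ℝ (⊤ : ℕ∞) (fderiv ℝ F) S := hF.fderiv_of_isOpen hSopen (by simp)
  have hHd : ContDiffOn ℝ (⊤ : ℕ∞) (fderiv ℝ H) S := hH.fderiv_of_isOpen hSopen (by simp)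
  have hFdd : ∀ y ∈ S, DifferentiableAt ℝ (fderiv ℝ F) y := fun y hy =>
    (hFd.differentiableOn (by simp)).differentiableAt (hSopen.mem_nhds hy)
  have hHdd : ∀ y ∈ S, DifferentiableAt ℝ (fderiv ℝ H) y := fun y hy =>
    (hHd.differentiableOn (by simp)).differentiableAt (hSopen.mem_nhds hy)
  have hMcont : ContinuousOn
      (fun y => fderiv ℝ (fderiv ℝ F) y ((0 : Fin n → ℝ), Pi.single j 1)
        ((0 : Fin n → ℝ), Pi.single i 1)) S := by
    have h1 : ContinuousOn (fderiv ℝ (fderiv ℝ F)) S :=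
      hFd.continuousOn_fderiv_of_isOpen hSopen (by simp)
    exact (h1.clm_apply continuousOn_const).clm_apply continuousOn_const
  have hzero : ∀ y ∈ S, y.1 i ≠ y.1 j →
      fderiv ℝ (fderiv ℝ F) y ((0 : Fin n → ℝ), Pi.single j 1)
        ((0 : Fin n → ℝ), Pi.single i 1) = 0 := by
    rintro ⟨l, μ⟩ hy hne
    have hlV : l ∈ Set.univ.pi I := hy.1
    have hρ : (∏ k, l k) ≠ 0 := Finset.prod_ne_zero_iff.2 fun k _ => hV0 l hlV k
    have fiber_rel : ∀ (a b : Fin n),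
        fderiv ℝ (fderiv ℝ H) (l, μ) ((0 : Fin n → ℝ), Pi.single b 1)
          ((0 : Fin n → ℝ), Pi.single a 1) =
        (l a / ∏ k, l k) * fderiv ℝ (fderiv ℝ F) (l, μ) ((0 : Fin n → ℝ), Pi.single b 1)
          ((0 : Fin n → ℝ), Pi.single a 1) := by
      intro a b
      have hmem : ∀ ν : Fin n → ℝ, ((l, ν) : _ × _) ∈ S := fun ν => ⟨hlV, trivial⟩
      have hfun : (fun ν => fderiv ℝ H (l, ν) ((0 : Fin n → ℝ), Pi.single a 1)) =
          (fun ν => (l a / ∏ k, l k) * fderiv ℝ F (l, ν) ((0 : Fin n → ℝ), Pi.single a 1)) := by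
        funext ν
        exact heq (l, ν) (hmem ν) a
      have hAF : ∀ ν : Fin n → ℝ, DifferentiableAt ℝ
          (fun y => fderiv ℝ F y ((0 : Fin n → ℝ), Pi.single a 1)) (l, ν) := fun ν =>
        (hFdd _ (hmem ν)).clm_apply (differentiableAt_const _)
      have hAH : ∀ ν : Fin n → ℝ, DifferentiableAt ℝ
          (fun y => fderiv ℝ H y ((0 : Fin n → ℝ), Pi.single a 1)) (l, ν) := fun ν =>
        (hHdd _ (hmem ν)).clm_apply (differentiableAt_const _)
      have hfibF : DifferentiableAt ℝ
          (fun ν => fderiv ℝ F (l, ν) ((0 : Fin n → ℝ), Pi.single a 1)) μ :=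
        (hAF μ).comp μ (hasFDerivAt_prodMk_right l μ).differentiableAt
      have hL : fderiv ℝ (fun ν => fderiv ℝ H (l, ν) ((0 : Fin n → ℝ), Pi.single a 1)) μ
          (Pi.single b 1) =
          fderiv ℝ (fderiv ℝ H) (l, μ) ((0 : Fin n → ℝ), Pi.single b 1)
            ((0 : Fin n → ℝ), Pi.single a 1) := by
        rw [pqbh_fiber_fderiv _ (hAH μ) (Pi.single b 1)]
        rw [pqbh_fderiv_apply (hHdd _ (hmem μ))]
      have hR : fderiv ℝ (fun ν => fderiv ℝ F (l, ν) ((0 : Fin n → ℝ), Pi.single a 1)) μ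
          (Pi.single b 1) =
          fderiv ℝ (fderiv ℝ F) (l, μ) ((0 : Fin n → ℝ), Pi.single b 1)
            ((0 : Fin n → ℝ), Pi.single a 1) := by
        rw [pqbh_fiber_fderiv _ (hAF μ) (Pi.single b 1)]
        rw [pqbh_fderiv_apply (hFdd _ (hmem μ))]
      calc fderiv ℝ (fderiv ℝ H) (l, μ) ((0 : Fin n → ℝ), Pi.single b 1)
            ((0 : Fin n → ℝ), Pi.single a 1)
          = fderiv ℝ (fun ν => fderiv ℝ H (l, ν) ((0 : Fin n → ℝ), Pi.single a 1)) μ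
            (Pi.single b 1) := hL.symm
        _ = fderiv ℝ (fun ν => (l a / ∏ k, l k) *
              fderiv ℝ F (l, ν) ((0 : Fin n → ℝ), Pi.single a 1)) μ (Pi.single b 1) := by
            rw [hfun]
        _ = (l a / ∏ k, l k) * fderiv ℝ
              (fun ν => fderiv ℝ F (l, ν) ((0 : Fin n → ℝ), Pi.single a 1)) μ
              (Pi.single b 1) := by
            rw [fderiv_const_mul hfibF]
            simp
        _ = (l a / ∏ k, l k) * fderiv ℝ (fderiv ℝ F) (l, μ)
              ((0 : Fin n → ℝ), Pi.single b 1) ((0 : Fin n → ℝ), Pi.single a 1) := by rw [hR]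
    have hsymF : IsSymmSndFDerivAt ℝ F (l, μ) :=
      (hF.contDiffAt (hSopen.mem_nhds hy)).isSymmSndFDerivAt (by rw [minSmoothness_of_isRCLikeNormedField]; exact WithTop.coe_le_coe.2 le_top)
    have hsymH : IsSymmSndFDerivAt ℝ H (l, μ) :=
      (hH.contDiffAt (hSopen.mem_nhds hy)).isSymmSndFDerivAt (by rw [minSmoothness_of_isRCLikeNormedField]; exact WithTop.coe_le_coe.2 le_top)
    have e1 := fiber_rel i j
    have e2 := fiber_rel j i
    rw [hsymH ((0 : Fin n → ℝ), Pi.single j 1) ((0 : Fin n → ℝ), Pi.single i 1)] at e1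
    rw [hsymF ((0 : Fin n → ℝ), Pi.single j 1) ((0 : Fin n → ℝ), Pi.single i 1)] at e1
    rw [e2] at e1
    have hcne : l j / ∏ k, l k ≠ l i / ∏ k, l k := by
      intro hc
      rw [div_eq_div_iff hρ hρ] at hc
      exact (Ne.symm hne) (mul_right_cancel₀ hρ hc)
    have e1' := sub_eq_zero.2 e1
    rw [← sub_mul] at e1'
    have hD := (mul_eq_zero.1 e1').resolve_left (sub_ne_zero.2 hcne)
    rw [hsymF]
    exact hD
  exact pqbh_dense_zero I hIopen _ hMcont i j hij hzero x hx

theorem pfaffian_qbh_mu_structure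
    (n : ℕ) (hn : 1 ≤ n)
    -- V is an open box: a product of open intervals (open order-connected sets in ℝ)
    (I : Fin n → Set ℝ) (hIopen : ∀ i, IsOpen (I i))
    (hIconn : ∀ i, (I i).OrdConnected)
    (V : Set (Fin n → ℝ)) (hV : V = Set.univ.pi I)
    -- on V all coordinates λ_i are nonzero
    (hV0 : ∀ l ∈ V, ∀ i, l i ≠ 0)
    (H F : (Fin n → ℝ) × (Fin n → ℝ) → ℝ)
    (hH : ContDiffOn ℝ (⊤ : ℕ∞) H (V ×ˢ (Set.univ : Set (Fin n → ℝ))))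
    (hF : ContDiffOn ℝ (⊤ : ℕ∞) F (V ×ˢ (Set.univ : Set (Fin n → ℝ))))
    -- the μ-half of the Pfaffian quasi-biHamiltonian equations
    (heq : ∀ x ∈ V ×ˢ (Set.univ : Set (Fin n → ℝ)), ∀ i : Fin n,
      fderiv ℝ H x ((0 : Fin n → ℝ), Pi.single i 1) =
        (x.1 i / ∏ k, x.1 k) * fderiv ℝ F x ((0 : Fin n → ℝ), Pi.single i 1)) :
    ∃ (G : Fin n → (Fin n → ℝ) → ℝ → ℝ) (K : (Fin n → ℝ) → ℝ),
      (∀ i, ContDiffOn ℝ (⊤ : ℕ∞) (fun p : (Fin n → ℝ) × ℝ => G i p.1 p.2)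
        (V ×ˢ (Set.univ : Set ℝ))) ∧
      ContDiffOn ℝ (⊤ : ℕ∞) K V ∧
      ∀ x ∈ V ×ˢ (Set.univ : Set (Fin n → ℝ)),
        H x = (1 / ∏ k, x.1 k) * ∑ i, x.1 i * G i x.1 (x.2 i) + K x.1 ∧
        F x = ∑ i, G i x.1 (x.2 i) := by
  subst hV
  set V : Set (Fin n → ℝ) := Set.univ.pi I with hVdef
  set S := V ×ˢ (Set.univ : Set (Fin n → ℝ)) with hSdef
  have hSopen : IsOpen S := (isOpen_set_pi Set.finite_univ fun a _ => hIopen a).prod isOpen_univ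
  have hFd : ContDiffOn ℝ (⊤ : ℕ∞) (fderiv ℝ F) S := hF.fderiv_of_isOpen hSopen (by simp)
  have hFdd : ∀ y ∈ S, DifferentiableAt ℝ (fderiv ℝ F) y := fun y hy =>
    (hFd.differentiableOn (by simp)).differentiableAt (hSopen.mem_nhds hy)
  have hFdiff : ∀ y ∈ S, DifferentiableAt ℝ F y := fun y hy =>
    (hF.differentiableOn (by simp)).differentiableAt (hSopen.mem_nhds hy)
  have hHdiff : ∀ y ∈ S, DifferentiableAt ℝ H y := fun y hy =>
    (hH.differentiableOn (by simp)).differentiableAt (hSopen.mem_nhds hy)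
  set i0 : Fin n := ⟨0, hn⟩ with hi0
  refine ⟨fun i l t => F (l, t • (Pi.single i 1 : Fin n → ℝ)) -
      (if i = i0 then 0 else F (l, (0 : Fin n → ℝ))),
    fun l => H (l, (0 : Fin n → ℝ)) - l i0 * F (l, (0 : Fin n → ℝ)) / ∏ k, l k, ?_, ?_, ?_⟩
  · -- smoothness of the G i
    intro i
    have h1 : ContDiffOn ℝ (⊤ : ℕ∞)
        (fun p : (Fin n → ℝ) × ℝ => F (p.1, p.2 • (Pi.single i 1 : Fin n → ℝ)))
        (V ×ˢ (Set.univ : Set ℝ)) := by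
      have hg : ContDiff ℝ (⊤ : ℕ∞)
          (fun p : (Fin n → ℝ) × ℝ => ((p.1, p.2 • (Pi.single i 1 : Fin n → ℝ)) :
            (Fin n → ℝ) × (Fin n → ℝ))) :=
        contDiff_fst.prodMk (contDiff_snd.smul contDiff_const)
      have hmaps : Set.MapsTo
          (fun p : (Fin n → ℝ) × ℝ => ((p.1, p.2 • (Pi.single i 1 : Fin n → ℝ)) :
            (Fin n → ℝ) × (Fin n → ℝ))) (V ×ˢ (Set.univ : Set ℝ)) S :=
        fun p hp => ⟨hp.1, trivial⟩
      have := hF.comp hg.contDiffOn hmaps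
      simpa [Function.comp_def] using this
    have h2 : ContDiffOn ℝ (⊤ : ℕ∞) (fun p : (Fin n → ℝ) × ℝ => F (p.1, (0 : Fin n → ℝ)))
        (V ×ˢ (Set.univ : Set ℝ)) := by
      have hg : ContDiff ℝ (⊤ : ℕ∞)
          (fun p : (Fin n → ℝ) × ℝ => ((p.1, (0 : Fin n → ℝ)) :
            (Fin n → ℝ) × (Fin n → ℝ))) := contDiff_fst.prodMk contDiff_const
      have hmaps : Set.MapsTo
          (fun p : (Fin n → ℝ) × ℝ => ((p.1, (0 : Fin n → ℝ)) :
            (Fin n → ℝ) × (Fin n → ℝ))) (V ×ˢ (Set.univ : Set ℝ)) S :=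
        fun p hp => ⟨hp.1, trivial⟩
      have := hF.comp hg.contDiffOn hmaps
      simpa [Function.comp_def] using this
    by_cases hii : i = i0
    · simpa [hii] using h1
    · simpa [hii] using h1.sub h2
  · -- smoothness of K
    have h1 : ContDiffOn ℝ (⊤ : ℕ∞) (fun l : Fin n → ℝ => H (l, (0 : Fin n → ℝ))) V := by
      have hg : ContDiff ℝ (⊤ : ℕ∞) (fun l : Fin n → ℝ => ((l, (0 : Fin n → ℝ)) :
          (Fin n → ℝ) × (Fin n → ℝ))) := contDiff_id.prodMk contDiff_const
      have hmaps : Set.MapsTo (fun l : Fin n → ℝ => ((l, (0 : Fin n → ℝ)) :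
          (Fin n → ℝ) × (Fin n → ℝ))) V S := fun l hl => ⟨hl, trivial⟩
      have := hH.comp hg.contDiffOn hmaps
      simpa [Function.comp_def] using this
    have h2 : ContDiffOn ℝ (⊤ : ℕ∞) (fun l : Fin n → ℝ => F (l, (0 : Fin n → ℝ))) V := by
      have hg : ContDiff ℝ (⊤ : ℕ∞) (fun l : Fin n → ℝ => ((l, (0 : Fin n → ℝ)) :
          (Fin n → ℝ) × (Fin n → ℝ))) := contDiff_id.prodMk contDiff_const
      have hmaps : Set.MapsTo (fun l : Fin n → ℝ => ((l, (0 : Fin n → ℝ)) :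
          (Fin n → ℝ) × (Fin n → ℝ))) V S := fun l hl => ⟨hl, trivial⟩
      have := hF.comp hg.contDiffOn hmaps
      simpa [Function.comp_def] using this
    have h3 : ContDiffOn ℝ (⊤ : ℕ∞) (fun l : Fin n → ℝ => l i0) V :=
      ((ContinuousLinearMap.proj i0 : (Fin n → ℝ) →L[ℝ] ℝ).contDiff).contDiffOn
    have h4 : ContDiffOn ℝ (⊤ : ℕ∞) (fun l : Fin n → ℝ => ∏ k, l k) V :=
      contDiffOn_prod fun k _ =>
        ((ContinuousLinearMap.proj k : (Fin n → ℝ) →L[ℝ] ℝ).contDiff).contDiffOn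
    have h5 : ∀ l ∈ V, (∏ k, l k) ≠ 0 := fun l hl =>
      Finset.prod_ne_zero_iff.2 fun k _ => hV0 l hl k
    exact h1.sub (((h3.mul h2).div h4 h5))
  · -- the pointwise identities
    rintro ⟨l, μ⟩ hx
    obtain ⟨hlV, -⟩ := hx
    have hmem : ∀ ν : Fin n → ℝ, ((l, ν) : (Fin n → ℝ) × (Fin n → ℝ)) ∈ S :=
      fun ν => ⟨hlV, trivial⟩
    have hρ : (∏ k, l k) ≠ 0 := Finset.prod_ne_zero_iff.2 fun k _ => hV0 l hlV k
    -- Claim B: the i-th partial of F depends only on μ i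
    have hB : ∀ (i : Fin n) (ν : Fin n → ℝ),
        fderiv ℝ F (l, ν) ((0 : Fin n → ℝ), Pi.single i 1) =
        fderiv ℝ F (l, ν i • (Pi.single i 1 : Fin n → ℝ)) ((0 : Fin n → ℝ), Pi.single i 1) := by
      intro i ν
      have hA : ∀ ν' : Fin n → ℝ, DifferentiableAt ℝ
          (fun y => fderiv ℝ F y ((0 : Fin n → ℝ), Pi.single i 1)) (l, ν') := fun ν' =>
        (hFdd _ (hmem ν')).clm_apply (differentiableAt_const _)
      have hg : Differentiable ℝ
          (fun ν' => fderiv ℝ F (l, ν') ((0 : Fin n → ℝ), Pi.single i 1)) := fun ν' =>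
        (hA ν').comp ν' (hasFDerivAt_prodMk_right l ν').differentiableAt
      have hcond : ∀ (x : Fin n → ℝ) (j : Fin n), ν j = (ν i • (Pi.single i 1 : Fin n → ℝ)) j ∨
          fderiv ℝ (fun ν' => fderiv ℝ F (l, ν') ((0 : Fin n → ℝ), Pi.single i 1)) x
            (Pi.single j 1) = 0 := by
        intro x j
        rcases eq_or_ne j i with rfl | hji
        · left; simp
        · right
          rw [pqbh_fiber_fderiv (fun y => fderiv ℝ F y ((0 : Fin n → ℝ), Pi.single i 1))
            (hA x) (Pi.single j 1)]
          rw [pqbh_fderiv_apply (hFdd _ (hmem x))]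
          exact pqbh_mixed_zero I hIopen hV0 H F hH hF heq i j (Ne.symm hji) (l, x) (hmem x)
      exact pqbh_aux_const hg ν (ν i • (Pi.single i 1 : Fin n → ℝ)) hcond
    -- the coordinate projections as continuous linear maps
    set σ : Fin n → ((Fin n → ℝ) →L[ℝ] (Fin n → ℝ)) :=
      fun i => (ContinuousLinearMap.proj i).smulRight (Pi.single i 1) with hσ
    have hσapp : ∀ (i : Fin n) (v : Fin n → ℝ), σ i v = v i • (Pi.single i 1 : Fin n → ℝ) := fun i v => rfl
    have hσe : ∀ (i j : Fin n), σ i (Pi.single j 1) =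
        if i = j then (Pi.single i 1 : Fin n → ℝ) else 0 := by
      intro i j
      rcases eq_or_ne i j with rfl | hij
      · simp [hσapp]
      · simp [hσapp, Pi.single_eq_of_ne hij, if_neg hij]
    have hσ0 : ∀ i : Fin n, σ i (0 : Fin n → ℝ) = 0 := fun i => by simp
    -- derivatives of the building blocks
    have hsummandF : ∀ (i : Fin n) (x : Fin n → ℝ), HasFDerivAt (fun ν => F (l, σ i ν))
        ((fderiv ℝ F (l, σ i x)).comp
          ((ContinuousLinearMap.inr ℝ (Fin n → ℝ) (Fin n → ℝ)).comp (σ i))) x := fun i x =>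
      ((hFdiff _ (hmem (σ i x))).hasFDerivAt).comp x
        ((hasFDerivAt_prodMk_right l (σ i x)).comp x (σ i).hasFDerivAt)
    have hfibF : ∀ x : Fin n → ℝ, HasFDerivAt (fun ν => F (l, ν))
        ((fderiv ℝ F (l, x)).comp (ContinuousLinearMap.inr ℝ (Fin n → ℝ) (Fin n → ℝ))) x :=
      fun x => ((hFdiff _ (hmem x)).hasFDerivAt).comp x (hasFDerivAt_prodMk_right l x)
    have hfibH : ∀ x : Fin n → ℝ, HasFDerivAt (fun ν => H (l, ν))
        ((fderiv ℝ H (l, x)).comp (ContinuousLinearMap.inr ℝ (Fin n → ℝ) (Fin n → ℝ))) x :=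
      fun x => ((hHdiff _ (hmem x)).hasFDerivAt).comp x (hasFDerivAt_prodMk_right l x)
    -- Claim C: structure of F on the fiber
    have hΦ : ∀ x : Fin n → ℝ, HasFDerivAt (fun ν => F (l, ν) - ∑ i, F (l, σ i ν))
        (((fderiv ℝ F (l, x)).comp (ContinuousLinearMap.inr ℝ (Fin n → ℝ) (Fin n → ℝ))) -
          ∑ i, (fderiv ℝ F (l, σ i x)).comp
            ((ContinuousLinearMap.inr ℝ (Fin n → ℝ) (Fin n → ℝ)).comp (σ i))) x :=
      fun x => (hfibF x).sub (HasFDerivAt.fun_sum fun i _ => hsummandF i x)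
    have hcondF : ∀ (x : Fin n → ℝ) (j : Fin n), μ j = (0 : Fin n → ℝ) j ∨
        fderiv ℝ (fun ν => F (l, ν) - ∑ i, F (l, σ i ν)) x (Pi.single j 1) = 0 := by
      intro x j
      right
      rw [(hΦ x).fderiv]
      simp only [ContinuousLinearMap.coe_sub', Pi.sub_apply, ContinuousLinearMap.coe_sum',
        Finset.sum_apply, ContinuousLinearMap.coe_comp', Function.comp_apply,
        ContinuousLinearMap.inr_apply]
      have hsum : ∑ i, fderiv ℝ F (l, σ i x) ((0 : Fin n → ℝ), σ i (Pi.single j 1)) =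
          fderiv ℝ F (l, σ j x) ((0 : Fin n → ℝ), Pi.single j 1) := by
        rw [Finset.sum_eq_single j]
        · rw [hσe j j]; simp
        · intro i _ hij
          rw [hσe i j, if_neg hij]
          simp [Prod.mk_zero_zero]
        · intro habs; exact absurd (Finset.mem_univ j) habs
      rw [hsum, hσapp j x, ← hB j x, sub_self]
    have hEqF := pqbh_aux_const (g := fun ν => F (l, ν) - ∑ i, F (l, σ i ν))
      (fun x => (hΦ x).differentiableAt) μ 0 hcondF
    -- Claim D: structure of H on the fiber
    have hΨ : ∀ x : Fin n → ℝ, HasFDerivAt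
        (fun ν => H (l, ν) - ∑ i, (l i / ∏ k, l k) * F (l, σ i ν))
        (((fderiv ℝ H (l, x)).comp (ContinuousLinearMap.inr ℝ (Fin n → ℝ) (Fin n → ℝ))) -
          ∑ i, (l i / ∏ k, l k) • ((fderiv ℝ F (l, σ i x)).comp
            ((ContinuousLinearMap.inr ℝ (Fin n → ℝ) (Fin n → ℝ)).comp (σ i)))) x :=
      fun x => (hfibH x).sub (HasFDerivAt.fun_sum fun i _ =>
        (hsummandF i x).const_mul (l i / ∏ k, l k))
    have hcondH : ∀ (x : Fin n → ℝ) (j : Fin n), μ j = (0 : Fin n → ℝ) j ∨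
        fderiv ℝ (fun ν => H (l, ν) - ∑ i, (l i / ∏ k, l k) * F (l, σ i ν)) x
          (Pi.single j 1) = 0 := by
      intro x j
      right
      rw [(hΨ x).fderiv]
      simp only [ContinuousLinearMap.coe_sub', Pi.sub_apply, ContinuousLinearMap.coe_sum',
        Finset.sum_apply, ContinuousLinearMap.coe_smul', Pi.smul_apply,
        ContinuousLinearMap.coe_comp', Function.comp_apply, ContinuousLinearMap.inr_apply,
        smul_eq_mul]
      have hsum : ∑ i, (l i / ∏ k, l k) *
          fderiv ℝ F (l, σ i x) ((0 : Fin n → ℝ), σ i (Pi.single j 1)) =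
          (l j / ∏ k, l k) * fderiv ℝ F (l, σ j x) ((0 : Fin n → ℝ), Pi.single j 1) := by
        rw [Finset.sum_eq_single j]
        · rw [hσe j j]; simp
        · intro i _ hij
          rw [hσe i j, if_neg hij]
          simp [Prod.mk_zero_zero]
        · intro habs; exact absurd (Finset.mem_univ j) habs
      rw [hsum, hσapp j x, ← hB j x]
      rw [heq (l, x) (hmem x) j]
      ring
    have hEqH := pqbh_aux_const
      (g := fun ν => H (l, ν) - ∑ i, (l i / ∏ k, l k) * F (l, σ i ν))
      (fun x => (hΨ x).differentiableAt) μ 0 hcondH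
    -- finish: algebraic manipulation
    constructor
    · -- the H identity
      simp only at hEqH ⊢
      have e1 : ∑ i, (l i / ∏ k, l k) * F (l, σ i μ) =
          (∑ i, l i * F (l, μ i • (Pi.single i 1 : Fin n → ℝ))) / ∏ k, l k := by
        rw [Finset.sum_div]
        exact Finset.sum_congr rfl fun i _ => by rw [hσapp]; ring
      have e2 : ∑ i, (l i / ∏ k, l k) * F (l, σ i (0 : Fin n → ℝ)) =
          ((∑ i, l i) * F (l, (0 : Fin n → ℝ))) / ∏ k, l k := by
        rw [Finset.sum_mul, Finset.sum_div]
        exact Finset.sum_congr rfl fun i _ => by rw [hσ0]; ring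
      have e3 : ∑ i, l i * ((fun i (l : Fin n → ℝ) t => F (l, t • (Pi.single i 1 : Fin n → ℝ)) -
          (if i = i0 then 0 else F (l, (0 : Fin n → ℝ)))) i l (μ i)) =
          (∑ i, l i * F (l, μ i • (Pi.single i 1 : Fin n → ℝ))) -
            ((∑ i, l i) * F (l, (0 : Fin n → ℝ)) - l i0 * F (l, (0 : Fin n → ℝ))) := by
        simp only [mul_sub]
        rw [Finset.sum_sub_distrib]
        congr 1
        have : ∀ i : Fin n, l i * (if i = i0 then (0:ℝ) else F (l, (0 : Fin n → ℝ))) =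
            l i * F (l, (0 : Fin n → ℝ)) -
              (if i = i0 then l i * F (l, (0 : Fin n → ℝ)) else 0) := by
          intro i
          by_cases hi : i = i0 <;> simp [hi]
        rw [Finset.sum_congr rfl fun i _ => this i, Finset.sum_sub_distrib,
          Finset.sum_ite_eq' Finset.univ i0, if_pos (Finset.mem_univ i0), ← Finset.sum_mul]
      rw [e1, e2] at hEqH
      rw [e3]
      have expand : H (l, μ) = (∑ i, l i * F (l, μ i • (Pi.single i 1 : Fin n → ℝ))) / (∏ k, l k) +
          (H (l, (0 : Fin n → ℝ)) - ((∑ i, l i) * F (l, (0 : Fin n → ℝ))) / ∏ k, l k) := by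
        rw [← hEqH]; ring
      rw [expand]
      field_simp
      ring
    · -- the F identity
      simp only at hEqF ⊢
      have e1 : ∑ i, F (l, σ i μ) = ∑ i, F (l, μ i • (Pi.single i 1 : Fin n → ℝ)) :=
        Finset.sum_congr rfl fun i _ => by rw [hσapp]
      have e2 : ∑ i : Fin n, F (l, σ i (0 : Fin n → ℝ)) =
          n * F (l, (0 : Fin n → ℝ)) := by
        rw [Finset.sum_congr rfl fun i (_ : i ∈ Finset.univ) => by rw [hσ0 i]]
        simp [Finset.card_univ, mul_comm]
      have e3 : ∑ i : Fin n, ((fun i (l : Fin n → ℝ) t =>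
          F (l, t • (Pi.single i 1 : Fin n → ℝ)) -
          (if i = i0 then 0 else F (l, (0 : Fin n → ℝ)))) i l (μ i)) =
          (∑ i, F (l, μ i • (Pi.single i 1 : Fin n → ℝ))) -
            ((n : ℝ) * F (l, (0 : Fin n → ℝ)) - F (l, (0 : Fin n → ℝ))) := by
        rw [Finset.sum_sub_distrib]
        congr 1
        have : ∀ i : Fin n, (if i = i0 then (0:ℝ) else F (l, (0 : Fin n → ℝ))) =
            F (l, (0 : Fin n → ℝ)) - (if i = i0 then F (l, (0 : Fin n → ℝ)) else 0) := by
          intro i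
          by_cases hi : i = i0 <;> simp [hi]
        rw [Finset.sum_congr rfl fun i _ => this i, Finset.sum_sub_distrib,
          Finset.sum_ite_eq' Finset.univ i0, if_pos (Finset.mem_univ i0)]
        simp [Finset.card_univ]
      rw [e1, e2] at hEqF
      rw [e3]
      linarith [hEqF]

end
end
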